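/- Let f(x) = ln(1+x) - x + (x²/2)·(1/(1+x/3))² for x ≥ 0. Then the derivative of f at every x > 0 equals -x³·(x+9)/((x+1)·(x+3)³); consequently f is strictly decreasing on (0, ∞) and attains its maximum value 0 at x = 0. -/

import Mathlib

noncomputable def f16 (x : ℝ) : ℝ :=
  Real.log (1 + x) - x + x ^ 2 / 2 * (1 / (1 + x / 3)) ^ 2

open Set

lemma f16_zero : f16 0 = 0 := by
  simp [f16]

lemma f16_hasDerivAt {x : ℝ} (hx : -1 < x) :
    HasDerivAt f16 (-(x ^ 3 * (x + 9)) / ((x + 1) * (x + 3) ^ 3)) x := by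
  have hden : 1 + x / 3 ≠ 0 := by linarith
  have hlog : HasDerivAt (fun y => Real.log (1 + y)) (1 / (1 + x)) x := by
    simpa [one_div] using ((hasDerivAt_id' x).const_add 1).log (by linarith)
  have hrecip : HasDerivAt (fun y => 1 / (1 + y / 3)) (-(1 / 3) / (1 + x / 3) ^ 2) x := by
    simpa [one_div] using (((hasDerivAt_id' x).div_const 3).const_add 1).fun_inv hden
  have hhalfsq : HasDerivAt (fun y => y ^ 2 / 2) x x := by
    simpa using (hasDerivAt_pow 2 x).div_const 2
  refine ((hlog.sub (hasDerivAt_id' x)).add (hhalfsq.mul (hrecip.fun_pow 2))).congr_deriv ?_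
  have hx1 : x + 1 ≠ 0 := by linarith
  have hx3 : x + 3 ≠ 0 := by linarith
  rw [show 1 + x / 3 = (x + 3) / 3 by ring, add_comm 1 x]
  norm_num only [Nat.cast_ofNat, pow_one]
  field_simp
  ring

lemma f16_deriv_neg {x : ℝ} (hx : 0 < x) :
    -(x ^ 3 * (x + 9)) / ((x + 1) * (x + 3) ^ 3) < 0 :=
  div_neg_of_neg_of_pos (neg_neg_of_pos (by positivity)) (by positivity)

lemma f16_strictAntiOn_Ici : StrictAntiOn f16 (Ici 0) := by
  refine strictAntiOn_of_deriv_neg (convex_Ici 0) ?_ ?_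
  · exact fun x hx =>
      (f16_hasDerivAt (by linarith [mem_Ici.mp hx])).continuousAt.continuousWithinAt
  · intro x hx
    rw [interior_Ici] at hx
    rw [(f16_hasDerivAt (by linarith [mem_Ioi.mp hx])).deriv]
    exact f16_deriv_neg hx

theorem f16_deriv_and_max :
    (∀ x : ℝ, 0 < x →
      HasDerivAt f16 (-(x ^ 3 * (x + 9)) / ((x + 1) * (x + 3) ^ 3)) x) ∧
    StrictAntiOn f16 (Set.Ioi 0) ∧
    (∀ x : ℝ, 0 ≤ x → f16 x ≤ 0) ∧ f16 0 = 0 := by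
  refine ⟨fun x hx => f16_hasDerivAt (by linarith),
    f16_strictAntiOn_Ici.mono Ioi_subset_Ici_self, fun x hx => ?_, f16_zero⟩
  simpa [f16_zero] using f16_strictAntiOn_Ici.antitoneOn self_mem_Ici hx hx
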